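/- Let f : ℝⁿ → ℝ be bounded and Borel, γ the standard Gaussian measure, and T_t f(x) = ∫ f(e^{-t}x + √(1−e^{-2t}) y) dγ(y) the Ornstein–Uhlenbeck semigroup. Then for every t > 0, T_t f is smooth (C^∞) on ℝⁿ. -/

import Mathlib

open MeasureTheory Real
open scoped RealInnerProductSpace NNReal ENNReal


lemma gauss_int (n : ℕ) (c : ℝ) (hc : 0 < c) :
    Integrable (fun z : EuclideanSpace ℝ (Fin n) => Real.exp (-c * ‖z‖ ^ 2)) := by
  have h := (GaussianFourier.integrable_cexp_neg_mul_sq_norm_add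
    (V := EuclideanSpace ℝ (Fin n)) (b := (c : ℂ)) (by simpa using hc) 0 0).norm
  refine h.congr (by
    filter_upwards with z
    simp [Complex.norm_exp]
    norm_cast
    exact Or.inl rfl)

lemma integrable_exp_combo (n : ℕ) (b R : ℝ) (hb : 0 < b) :
    Integrable (fun z : EuclideanSpace ℝ (Fin n) => Real.exp (R * ‖z‖ - b * ‖z‖ ^ 2)) := by
  have hg : Integrable (fun z : EuclideanSpace ℝ (Fin n) =>
      Real.exp (R ^ 2 / (2 * b)) * Real.exp (-(b / 2) * ‖z‖ ^ 2)) :=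
    (gauss_int n (b / 2) (by positivity)).const_mul _
  refine hg.mono' ?_ ?_
  · exact (Real.continuous_exp.comp (by fun_prop)).aestronglyMeasurable
  · filter_upwards with z
    rw [Real.norm_eq_abs, Real.abs_exp, ← Real.exp_add]
    refine Real.exp_le_exp.2 ?_
    have hcancel : R ^ 2 / (2 * b) * (2 * b) = R ^ 2 :=
      div_mul_cancel₀ _ (by positivity)
    nlinarith [sq_nonneg (b * ‖z‖ - R), hb, mul_pos hb hb, sq_nonneg ‖z‖]

lemma pow_le_exp_aux (r : ℝ) (hr : 0 ≤ r) (k : ℕ) :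
    r ^ k ≤ (Nat.factorial k : ℝ) * (2 : ℝ)⁻¹ ^ k * Real.exp (2 * r) := by
  have h := Real.pow_div_factorial_le_exp (x := 2 * r) (by linarith) k
  have hfac : (0 : ℝ) < (Nat.factorial k : ℝ) := by positivity
  rw [div_le_iff₀ hfac] at h
  have hid : r ^ k = (2 : ℝ)⁻¹ ^ k * (2 * r) ^ k := by
    rw [mul_pow, ← mul_assoc, ← mul_pow]; norm_num
  rw [hid]
  calc (2 : ℝ)⁻¹ ^ k * (2 * r) ^ k ≤ (2 : ℝ)⁻¹ ^ k * (Real.exp (2 * r) * (Nat.factorial k : ℝ)) :=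
        mul_le_mul_of_nonneg_left h (by positivity)
    _ = (Nat.factorial k : ℝ) * (2 : ℝ)⁻¹ ^ k * Real.exp (2 * r) := by ring

set_option maxHeartbeats 1000000 in
set_option synthInstance.maxHeartbeats 400000 in
theorem laplace_analytic (n : ℕ) (h : EuclideanSpace ℝ (Fin n) → ℝ)
    (hm : AEStronglyMeasurable h (volume : Measure (EuclideanSpace ℝ (Fin n))))
    (hmom : ∀ R : ℝ, Integrable (fun z : EuclideanSpace ℝ (Fin n) =>
      Real.exp (R * ‖z‖) * ‖h z‖)) :
    AnalyticOnNhd ℝ (fun a : EuclideanSpace ℝ (Fin n) => ∫ z, Real.exp ⟪z, a⟫ * h z) Set.univ := by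
  intro a₀ _
  set G : ∀ k : ℕ, EuclideanSpace ℝ (Fin n) →
      ContinuousMultilinearMap ℝ (fun _ : Fin k => EuclideanSpace ℝ (Fin n)) ℝ :=
    fun k z => (ContinuousMultilinearMap.mkPiAlgebra ℝ (Fin k) ℝ).compContinuousLinearMap
      (fun _ => innerSL ℝ z) with hG
  have contG : ∀ k : ℕ, Continuous fun z : EuclideanSpace ℝ (Fin n) => G k z := by
    intro k
    have h1 : Continuous fun z : EuclideanSpace ℝ (Fin n) => (fun _ : Fin k => innerSL ℝ z) :=
      continuous_pi fun _ => (innerSL ℝ).continuous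
    exact (((ContinuousMultilinearMap.mkPiAlgebra ℝ (Fin k) ℝ).compContinuousLinearMapLRight).cont).comp h1
  have normG : ∀ (k : ℕ) (z : EuclideanSpace ℝ (Fin n)), ‖G k z‖ ≤ ‖z‖ ^ k := by
    intro k z
    calc ‖G k z‖ ≤ ‖ContinuousMultilinearMap.mkPiAlgebra ℝ (Fin k) ℝ‖ *
          ∏ _i : Fin k, ‖innerSL ℝ z‖ :=
        ContinuousMultilinearMap.norm_compContinuousLinearMap_le _ _
      _ = ‖z‖ ^ k := by
        simp [ContinuousMultilinearMap.norm_mkPiAlgebra, innerSL_apply_norm]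
  have applyG : ∀ (k : ℕ) (z y : EuclideanSpace ℝ (Fin n)), (G k z) (fun _ => y) = ⟪z, y⟫ ^ k := by
    intro k z y
    simp [hG]
  set Φ : ∀ k : ℕ, EuclideanSpace ℝ (Fin n) →
      ContinuousMultilinearMap ℝ (fun _ : Fin k => EuclideanSpace ℝ (Fin n)) ℝ :=
    fun k z => (Real.exp ⟪z, a₀⟫ * h z) • G k z with hΦ
  set B : EuclideanSpace ℝ (Fin n) → ℝ := fun z => Real.exp ((‖a₀‖ + 2) * ‖z‖) * ‖h z‖ with hB
  have hBint : Integrable B := hmom _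
  have hBnonneg : ∀ z, 0 ≤ B z := fun z => by positivity
  set D : ℝ := ∫ z, B z with hD
  have hDnonneg : 0 ≤ D := integral_nonneg hBnonneg
  have key : ∀ (k : ℕ) (z : EuclideanSpace ℝ (Fin n)),
      Real.exp ⟪z, a₀⟫ * ‖h z‖ * ‖z‖ ^ k ≤ ((Nat.factorial k : ℝ) * (2 : ℝ)⁻¹ ^ k) * B z := by
    intro k z
    have e1 : Real.exp ⟪z, a₀⟫ ≤ Real.exp (‖a₀‖ * ‖z‖) := by
      refine Real.exp_le_exp.2 ?_
      calc ⟪z, a₀⟫ ≤ ‖z‖ * ‖a₀‖ := real_inner_le_norm _ _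
        _ = ‖a₀‖ * ‖z‖ := mul_comm _ _
    have e2 := pow_le_exp_aux ‖z‖ (norm_nonneg z) k
    calc Real.exp ⟪z, a₀⟫ * ‖h z‖ * ‖z‖ ^ k
        ≤ Real.exp (‖a₀‖ * ‖z‖) * ‖h z‖ * ((Nat.factorial k : ℝ) * (2 : ℝ)⁻¹ ^ k * Real.exp (2 * ‖z‖)) :=
          mul_le_mul (mul_le_mul_of_nonneg_right e1 (norm_nonneg _)) e2 (by positivity)
            (by positivity)
      _ = ((Nat.factorial k : ℝ) * (2 : ℝ)⁻¹ ^ k) * B z := by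
          simp only [hB, add_mul, Real.exp_add]; ring
  have measΦ : ∀ k, AEStronglyMeasurable (Φ k) volume := by
    intro k
    refine AEStronglyMeasurable.smul (𝕜 := ℝ) ?_ (contG k).aestronglyMeasurable
    exact ((Real.continuous_exp.comp (continuous_id.inner continuous_const)).aestronglyMeasurable).mul hm
  have boundΦ : ∀ (k : ℕ) (z : EuclideanSpace ℝ (Fin n)),
      ‖Φ k z‖ ≤ ((Nat.factorial k : ℝ) * (2 : ℝ)⁻¹ ^ k) * B z := by
    intro k z
    calc ‖Φ k z‖ ≤ ‖Real.exp ⟪z, a₀⟫ * h z‖ * ‖G k z‖ := by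
          simp only [hΦ]; exact ContinuousMultilinearMap.opNorm_smul_le _ _
      _ = Real.exp ⟪z, a₀⟫ * ‖h z‖ * ‖G k z‖ := by
          rw [Real.norm_eq_abs, abs_mul, Real.abs_exp, Real.norm_eq_abs]
      _ ≤ Real.exp ⟪z, a₀⟫ * ‖h z‖ * ‖z‖ ^ k :=
          mul_le_mul_of_nonneg_left (normG k z) (by positivity)
      _ ≤ _ := key k z
  have intΦ : ∀ k, Integrable (Φ k) := by
    intro k
    refine (hBint.const_mul ((Nat.factorial k : ℝ) * (2 : ℝ)⁻¹ ^ k)).mono' (measΦ k) ?_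
    filter_upwards with z using boundΦ k z
  set p : FormalMultilinearSeries ℝ (EuclideanSpace ℝ (Fin n)) ℝ :=
    fun k => ((Nat.factorial k : ℝ))⁻¹ • ∫ z, Φ k z with hp
  have normp : ∀ k : ℕ, ‖p k‖ ≤ (2 : ℝ)⁻¹ ^ k * D := by
    intro k
    have hfac : (0 : ℝ) < (Nat.factorial k : ℝ) := by positivity
    calc ‖p k‖ ≤ ‖(Nat.factorial k : ℝ)⁻¹‖ * ‖∫ z, Φ k z‖ := by
          simp only [hp]; exact ContinuousMultilinearMap.opNorm_smul_le _ _
      _ = (Nat.factorial k : ℝ)⁻¹ * ‖∫ z, Φ k z‖ := by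
          rw [Real.norm_eq_abs, abs_of_nonneg (by positivity)]
      _ ≤ (Nat.factorial k : ℝ)⁻¹ * (((Nat.factorial k : ℝ) * (2 : ℝ)⁻¹ ^ k) * D) := by
          refine mul_le_mul_of_nonneg_left ?_ (by positivity)
          calc ‖∫ z, Φ k z‖ ≤ ∫ z, ‖Φ k z‖ := norm_integral_le_integral_norm _
            _ ≤ ∫ z, ((Nat.factorial k : ℝ) * (2 : ℝ)⁻¹ ^ k) * B z :=
                integral_mono (intΦ k).norm (hBint.const_mul _) (boundΦ k)
            _ = ((Nat.factorial k : ℝ) * (2 : ℝ)⁻¹ ^ k) * D := by rw [integral_const_mul, hD]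
      _ = (2 : ℝ)⁻¹ ^ k * D := by field_simp
  have hradius : (1 : ℝ≥0∞) ≤ p.radius := by
    refine le_trans (by norm_num) (p.le_radius_of_bound D (r := 2) fun k => ?_)
    calc ‖p k‖ * ((2 : ℝ≥0) : ℝ) ^ k ≤ ((2 : ℝ)⁻¹ ^ k * D) * 2 ^ k := by
          push_cast
          exact mul_le_mul_of_nonneg_right (normp k) (by positivity)
      _ = D := by
          rw [mul_comm ((2:ℝ)⁻¹ ^ k) D, mul_assoc, ← mul_pow]
          norm_num
  refine ⟨p, 1, hradius, one_pos, ?_⟩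
  intro y hy
  have hy1 : ‖y‖ < 1 := by
    rwa [EMetric.mem_ball, edist_zero_right, ← ofReal_norm,
      ENNReal.ofReal_lt_one] at hy
  set F : ℕ → EuclideanSpace ℝ (Fin n) → ℝ :=
    fun k z => (Real.exp ⟪z, a₀⟫ * h z) * (⟪z, y⟫ ^ k / (Nat.factorial k : ℝ)) with hF
  have boundF : ∀ (k : ℕ) (z : EuclideanSpace ℝ (Fin n)),
      ‖F k z‖ ≤ (‖y‖ / 2) ^ k * B z := by
    intro k z
    have h1 : ‖F k z‖ = Real.exp ⟪z, a₀⟫ * ‖h z‖ * (|⟪z, y⟫| ^ k / (Nat.factorial k : ℝ)) := by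
      rw [hF]
      simp only [Real.norm_eq_abs, abs_mul, abs_div, abs_pow, Real.abs_exp, Nat.abs_cast]
    have hfac : (0 : ℝ) < (Nat.factorial k : ℝ) := by positivity
    calc ‖F k z‖ = Real.exp ⟪z, a₀⟫ * ‖h z‖ * (|⟪z, y⟫| ^ k / (Nat.factorial k : ℝ)) := h1
      _ ≤ Real.exp ⟪z, a₀⟫ * ‖h z‖ * ((‖z‖ * ‖y‖) ^ k / (Nat.factorial k : ℝ)) := by
          gcongr
          exact abs_real_inner_le_norm _ _
      _ = ‖y‖ ^ k * (Real.exp ⟪z, a₀⟫ * ‖h z‖ * ‖z‖ ^ k) / (Nat.factorial k : ℝ) := by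
          rw [mul_pow]; ring
      _ ≤ ‖y‖ ^ k * (((Nat.factorial k : ℝ) * (2 : ℝ)⁻¹ ^ k) * B z) / (Nat.factorial k : ℝ) := by
          gcongr _ * ?_ / _
          exact key k z
      _ = (‖y‖ / 2) ^ k * B z := by
          rw [div_pow]; field_simp; rw [mul_assoc (‖y‖ ^ k * (1/2) ^ k), mul_comm (B z), ← mul_assoc, mul_assoc (‖y‖ ^ k), ← mul_pow]; norm_num
  have measF : ∀ k, AEStronglyMeasurable (F k) volume := by
    intro k
    refine (((Real.continuous_exp.comp
      (continuous_id.inner continuous_const)).aestronglyMeasurable).mul hm).mul ?_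
    exact (((continuous_id.inner continuous_const).pow k).div_const _).aestronglyMeasurable
  have intF : ∀ k, Integrable (F k) := by
    intro k
    refine (hBint.const_mul ((‖y‖ / 2) ^ k)).mono' (measF k) ?_
    filter_upwards with z using boundF k z
  have sumF : Summable fun k => ∫ z, ‖F k z‖ := by
    have hgeo : Summable fun k : ℕ => (‖y‖ / 2) ^ k * D := by
      refine Summable.mul_right D (summable_geometric_of_lt_one (by positivity) ?_)
      linarith
    refine Summable.of_nonneg_of_le (fun k => integral_nonneg fun z => norm_nonneg _)
      (fun k => ?_) hgeo
    calc (∫ z, ‖F k z‖) ≤ ∫ z, (‖y‖ / 2) ^ k * B z :=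
          integral_mono (intF k).norm (hBint.const_mul _) (boundF k)
      _ = (‖y‖ / 2) ^ k * D := by rw [integral_const_mul, hD]
  have hassum := hasSum_integral_of_summable_integral_norm (F := F) (μ := volume) intF sumF
  have tsumF : ∀ z : EuclideanSpace ℝ (Fin n),
      ∑' k, F k z = Real.exp ⟪z, a₀ + y⟫ * h z := by
    intro z
    have hs : HasSum (fun k => ⟪z, y⟫ ^ k / (Nat.factorial k : ℝ)) (Real.exp ⟪z, y⟫) := by
      rw [Real.exp_eq_exp_ℝ]
      exact NormedSpace.expSeries_div_hasSum_exp ⟪z, y⟫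
    have := (hs.mul_left (Real.exp ⟪z, a₀⟫ * h z)).tsum_eq
    rw [hF]
    rw [this, inner_add_right, Real.exp_add]
    ring
  have happ : ∀ k : ℕ, (p k fun _ => y) = ∫ z, F k z := by
    intro k
    have h1 : (p k fun _ => y) = (Nat.factorial k : ℝ)⁻¹ * ((∫ z, Φ k z) fun _ => y) := by
      rw [hp]; simp
    rw [h1, ContinuousMultilinearMap.integral_apply (intΦ k)]
    have h2 : ∀ z : EuclideanSpace ℝ (Fin n),
        (Φ k z) (fun _ => y) = Real.exp ⟪z, a₀⟫ * h z * ⟪z, y⟫ ^ k := by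
      intro z
      rw [hΦ]
      simp only [ContinuousMultilinearMap.smul_apply, smul_eq_mul]
      rw [applyG]
    rw [show ∫ z, (Φ k z) (fun _ => y) = ∫ z, Real.exp ⟪z, a₀⟫ * h z * ⟪z, y⟫ ^ k from
      integral_congr_ae (Filter.Eventually.of_forall h2)]
    rw [hF]
    rw [show (fun z : EuclideanSpace ℝ (Fin n) =>
        Real.exp ⟪z, a₀⟫ * h z * (⟪z, y⟫ ^ k / (Nat.factorial k : ℝ))) = fun z =>
        (Nat.factorial k : ℝ)⁻¹ * (Real.exp ⟪z, a₀⟫ * h z * ⟪z, y⟫ ^ k) from funext fun z => by ring]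
    rw [integral_const_mul]
  have hval : (∫ z, ∑' k, F k z) = ∫ z, Real.exp ⟪z, a₀ + y⟫ * h z :=
    integral_congr_ae (Filter.Eventually.of_forall tsumF)
  rw [hval] at hassum
  simpa only [happ] using hassum
lemma OU_core (n : ℕ) (f : EuclideanSpace ℝ (Fin n) → ℝ) (hf : Measurable f)
    (C : ℝ) (hb : ∀ x, |f x| ≤ C) (a s c : ℝ) (hs : 0 < s) (hc : 0 < c) :
    ContDiff ℝ (⊤ : ℕ∞) (fun x : EuclideanSpace ℝ (Fin n) => ∫ y,
      f (a • x + s • y) ∂(volume.withDensity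
        fun y => ENNReal.ofReal (c * Real.exp (-‖y‖ ^ 2 / 2)))) := by
  have hC : 0 ≤ C := le_trans (abs_nonneg _) (hb 0)
  obtain ⟨β, hβdef⟩ : ∃ β : ℝ, β = 1 / (2 * s ^ 2) := ⟨_, rfl⟩
  have hβ : 0 < β := by rw [hβdef]; positivity
  obtain ⟨h, hhdef⟩ : ∃ h : EuclideanSpace ℝ (Fin n) → ℝ,
      h = fun z => c * Real.exp (-β * ‖z‖ ^ 2) * f z := ⟨_, rfl⟩
  have hm : AEStronglyMeasurable h (volume : Measure (EuclideanSpace ℝ (Fin n))) := by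
    rw [hhdef]
    exact ((continuous_const.mul (Real.continuous_exp.comp
      (by fun_prop))).measurable.mul hf).aestronglyMeasurable
  have hbound : ∀ z, ‖h z‖ ≤ c * Real.exp (-β * ‖z‖ ^ 2) * C := by
    intro z
    rw [hhdef, Real.norm_eq_abs, abs_mul, abs_mul, abs_of_pos hc, Real.abs_exp]
    exact mul_le_mul_of_nonneg_left (hb z) (by positivity)
  have hmom : ∀ R : ℝ, Integrable (fun z : EuclideanSpace ℝ (Fin n) =>
      Real.exp (R * ‖z‖) * ‖h z‖) := by
    intro R
    refine ((integrable_exp_combo n β R hβ).const_mul (c * C)).mono' ?_ ?_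
    · exact ((Real.continuous_exp.comp (by fun_prop)).aestronglyMeasurable).mul hm.norm
    · filter_upwards with z
      rw [Real.norm_eq_abs, abs_of_nonneg (by positivity)]
      calc Real.exp (R * ‖z‖) * ‖h z‖
          ≤ Real.exp (R * ‖z‖) * (c * Real.exp (-β * ‖z‖ ^ 2) * C) :=
            mul_le_mul_of_nonneg_left (hbound z) (Real.exp_pos _).le
        _ = c * C * Real.exp (R * ‖z‖ - β * ‖z‖ ^ 2) := by
            rw [show -β * ‖z‖ ^ 2 = -(β * ‖z‖ ^ 2) by ring, Real.exp_neg,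
              Real.exp_sub]
            field_simp
  set L : EuclideanSpace ℝ (Fin n) → ℝ := fun w => ∫ z, Real.exp ⟪z, w⟫ * h z with hL
  have hLa : ContDiff ℝ (⊤ : ℕ∞) L := (laplace_analytic n h hm hmom).contDiff
  -- main pointwise identity
  have main : ∀ x : EuclideanSpace ℝ (Fin n),
      (∫ y, f (a • x + s • y) ∂(volume.withDensity
        fun y => ENNReal.ofReal (c * Real.exp (-‖y‖ ^ 2 / 2))))
      = |((s : ℝ) ^ n)⁻¹| * (Real.exp (-β * ‖a • x‖ ^ 2) * L ((2 * β * a) • x)) := by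
    intro x
    have hg_meas : Measurable fun y : EuclideanSpace ℝ (Fin n) =>
        (c * Real.exp (-‖y‖ ^ 2 / 2)).toNNReal :=
      measurable_real_toNNReal.comp (continuous_const.mul
        (Real.continuous_exp.comp (by fun_prop))).measurable
    have step1 : (∫ y, f (a • x + s • y) ∂(volume.withDensity
          fun y => ENNReal.ofReal (c * Real.exp (-‖y‖ ^ 2 / 2))))
        = ∫ y, (c * Real.exp (-‖y‖ ^ 2 / 2)) * f (a • x + s • y) := by
      rw [show (fun y : EuclideanSpace ℝ (Fin n) =>
          ENNReal.ofReal (c * Real.exp (-‖y‖ ^ 2 / 2)))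
        = fun y => ((c * Real.exp (-‖y‖ ^ 2 / 2)).toNNReal : ℝ≥0∞) from rfl]
      rw [integral_withDensity_eq_integral_smul hg_meas]
      refine integral_congr_ae (Filter.Eventually.of_forall fun y => ?_)
      simp only [NNReal.smul_def, smul_eq_mul]
      rw [Real.coe_toNNReal _ (by positivity)]
    obtain ⟨H, hHdef⟩ : ∃ H : EuclideanSpace ℝ (Fin n) → ℝ,
        H = fun u => (c * Real.exp (-‖s⁻¹ • u‖ ^ 2 / 2)) * f (a • x + u) := ⟨_, rfl⟩
    have step2 : (∫ y, (c * Real.exp (-‖y‖ ^ 2 / 2)) * f (a • x + s • y))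
        = |((s : ℝ) ^ n)⁻¹| * ∫ u, H u := by
      have : ∀ y : EuclideanSpace ℝ (Fin n),
          (c * Real.exp (-‖y‖ ^ 2 / 2)) * f (a • x + s • y) = H (s • y) := by
        intro y
        rw [hHdef]
        simp [inv_smul_smul₀ hs.ne']
      rw [integral_congr_ae (Filter.Eventually.of_forall this),
        MeasureTheory.Measure.integral_comp_smul volume H s, finrank_euclideanSpace_fin,
        smul_eq_mul]
    have step3 : (∫ u, H u) = ∫ z, H (z - a • x) :=
      (integral_sub_right_eq_self H (a • x)).symm
    have step4 : ∀ z : EuclideanSpace ℝ (Fin n), H (z - a • x)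
        = Real.exp (-β * ‖a • x‖ ^ 2) * (Real.exp ⟪z, (2 * β * a) • x⟫ * h z) := by
      intro z
      rw [hHdef]
      have hns : ‖s⁻¹ • (z - a • x)‖ ^ 2 = (s⁻¹) ^ 2 * ‖z - a • x‖ ^ 2 := by
        rw [norm_smul, mul_pow, Real.norm_eq_abs, sq_abs]
      have hexp_eq : -‖s⁻¹ • (z - a • x)‖ ^ 2 / 2
          = -β * ‖a • x‖ ^ 2 + (⟪z, (2 * β * a) • x⟫ + -β * ‖z‖ ^ 2) := by
        rw [hns, norm_sub_sq_real, real_inner_smul_right, real_inner_smul_right, hβdef]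
        field_simp
        ring
      simp only [add_sub_cancel]
      rw [hexp_eq, Real.exp_add, Real.exp_add, hhdef]
      ring
    have step5 : (∫ z, H (z - a • x))
        = Real.exp (-β * ‖a • x‖ ^ 2) * L ((2 * β * a) • x) := by
      rw [integral_congr_ae (Filter.Eventually.of_forall step4), integral_const_mul, hL]
    rw [step1, step2, step3, step5]
  rw [funext main]
  have h1 : ContDiff ℝ (⊤ : ℕ∞) fun x : EuclideanSpace ℝ (Fin n) => -β * ‖a • x‖ ^ 2 :=
    contDiff_const.mul ((contDiff_const_smul a).norm_sq (𝕜 := ℝ))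
  exact contDiff_const.mul ((Real.contDiff_exp.comp h1).mul
    (hLa.comp (contDiff_const_smul _)))


noncomputable def stdGaussian (n : ℕ) : Measure (EuclideanSpace ℝ (Fin n)) :=
  volume.withDensity fun x => ENNReal.ofReal ((2 * π) ^ (-(n : ℝ) / 2) * Real.exp (-‖x‖ ^ 2 / 2))

/-- For a bounded Borel `f`, the Ornstein–Uhlenbeck semigroup `T_t f` given by Mehler's formula
is smooth for every `t > 0`. -/
theorem OU_smooth (n : ℕ) (f : EuclideanSpace ℝ (Fin n) → ℝ) (hf : Measurable f)
    (C : ℝ) (hb : ∀ x, |f x| ≤ C) (t : ℝ) (ht : 0 < t) :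
    ContDiff ℝ (⊤ : ℕ∞) (fun x => ∫ y,
      f (Real.exp (-t) • x + Real.sqrt (1 - Real.exp (-2 * t)) • y) ∂(stdGaussian n)) := by
  have hs : 0 < Real.sqrt (1 - Real.exp (-2 * t)) := by
    refine Real.sqrt_pos.2 ?_
    have : Real.exp (-2 * t) < 1 := by
      rw [← Real.exp_zero]
      exact Real.exp_lt_exp.2 (by linarith)
    linarith
  have hc : 0 < (2 * π) ^ (-(n : ℝ) / 2) :=
    Real.rpow_pos_of_pos (by positivity) _
  exact OU_core n f hf C hb (Real.exp (-t)) _ _ hs hc
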